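/- arXiv:2402.05271 — 3 statements merged into one kernel-verified Lean document; each statement's English description precedes it below -/
import Mathlib

section
/- Let g : ℝ^k → ℝ be differentiable, W ∈ ℝ^{k×d}, and for u ∈ ℝ^d define F_u : ℝ^{k×d} → ℝ by F_u(M) = g(M u). Then for all x, z ∈ ℝ^d, the Frobenius inner product of the gradients with respect to the weight matrix satisfies ⟨∇_M F_x(W), ∇_M F_z(W)⟩ = (∇g(Wx) · ∇g(Wz)) · (x · z). That is, the layerwise empirical NTK factors as the pre-activation tangent kernel value ∇g(Wx)·∇g(Wz) times the input inner product xᵀz. -/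
open Matrix

attribute [local instance] Matrix.frobeniusNormedAddCommGroup Matrix.frobeniusNormedSpace

/-- The gradient of a real-valued function on Euclidean space. -/
noncomputable def egrad {m : ℕ} (g : EuclideanSpace ℝ (Fin m) → ℝ)
    (u : EuclideanSpace ℝ (Fin m)) : EuclideanSpace ℝ (Fin m) :=
  gradient g u

/-- The matrix of partial derivatives of a scalar function of a matrix argument:
`(∇_M F(W))_{ij} = ∂F/∂W_{ij}`. -/
noncomputable def matGrad {k d : ℕ} (F : Matrix (Fin k) (Fin d) ℝ → ℝ)
    (W : Matrix (Fin k) (Fin d) ℝ) : Matrix (Fin k) (Fin d) ℝ :=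
  Matrix.of fun i j => fderiv ℝ F W (Matrix.single i j 1)

/-!
Since `F_x = g ∘ (M ↦ M x)` with `M ↦ M x` linear, the chain rule gives
`∂F_x/∂W_{ij} = ∂_i g(Wx) · x_j`, i.e. `∇_M F_x(W)` is the rank-one matrix `∇g(Wx) xᵀ`.
For rank-one matrices `trace ((a xᵀ)ᵀ (b zᵀ)) = (a ⬝ᵥ b) (x ⬝ᵥ z)`.
-/

namespace Matrix

theorem trace_transpose_vecMulVec_mul_vecMulVec {R m n : Type*} [CommSemiring R] [Fintype m]
    [Fintype n] (a b : m → R) (x z : n → R) :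
    ((vecMulVec a x)ᵀ * vecMulVec b z).trace = (a ⬝ᵥ b) * (x ⬝ᵥ z) := by
  rw [transpose_vecMulVec, vecMulVec_mul_vecMulVec, trace_vecMulVec, dotProduct_smul, smul_eq_mul]

section Calculus

variable {m n : Type*} [Fintype n]

theorem toLp_single_mulVec [DecidableEq m] [DecidableEq n] (i : m) (j : n) (c : ℝ)
    (x : n → ℝ) : WithLp.toLp 2 (single i j c *ᵥ x) = EuclideanSpace.single i (c * x j) := by
  ext i'
  simp [single_mulVec, Function.update_apply]

variable [Fintype m]

noncomputable def mulVecCLM (x : n → ℝ) : Matrix m n ℝ →L[ℝ] EuclideanSpace ℝ m :=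
  LinearMap.toContinuousLinearMap <|
    (WithLp.linearEquiv 2 ℝ (m → ℝ)).symm.toLinearMap ∘ₗ (mulVecBilin ℝ ℝ).flip x

@[simp]
theorem mulVecCLM_apply (x : n → ℝ) (M : Matrix m n ℝ) :
    mulVecCLM x M = WithLp.toLp 2 (M *ᵥ x) :=
  rfl

theorem fderiv_comp_toLp_mulVec {g : EuclideanSpace ℝ m → ℝ} {W : Matrix m n ℝ} {x : n → ℝ}
    (hg : DifferentiableAt ℝ g (WithLp.toLp 2 (W *ᵥ x))) (V : Matrix m n ℝ) :
    fderiv ℝ (fun M : Matrix m n ℝ => g (WithLp.toLp 2 (M *ᵥ x))) W V =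
      fderiv ℝ g (WithLp.toLp 2 (W *ᵥ x)) (WithLp.toLp 2 (V *ᵥ x)) :=
  DFunLike.congr_fun (hg.hasFDerivAt.comp W (mulVecCLM x).hasFDerivAt).fderiv V

end Calculus

end Matrix

theorem fderiv_apply_single {m : Type*} [Fintype m] [DecidableEq m] (g : EuclideanSpace ℝ m → ℝ)
    (u : EuclideanSpace ℝ m) (i : m) (a : ℝ) :
    fderiv ℝ g u (EuclideanSpace.single i a) = a * gradient g u i := by
  rw [← toDual_gradient, InnerProductSpace.toDual_apply_apply, EuclideanSpace.inner_single_right]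
  simp

theorem matGrad_comp_toLp_mulVec {k d : ℕ} {g : EuclideanSpace ℝ (Fin k) → ℝ}
    {W : Matrix (Fin k) (Fin d) ℝ} {x : Fin d → ℝ}
    (hg : DifferentiableAt ℝ g (WithLp.toLp 2 (W *ᵥ x))) :
    matGrad (fun M => g (WithLp.toLp 2 (M *ᵥ x))) W =
      vecMulVec (egrad g (WithLp.toLp 2 (W *ᵥ x))) x := by
  ext i j
  rw [matGrad, of_apply, fderiv_comp_toLp_mulVec hg, toLp_single_mulVec, one_mul,
    fderiv_apply_single, vecMulVec_apply, egrad, mul_comm]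

/-- pre-activation to neural tangent identity.
For `F_u(M) = g(Mu)`, the Frobenius inner product of the weight-gradients factors as the
PTK value times the input inner product:
`⟨∇_M F_x(W), ∇_M F_z(W)⟩ = (∇g(Wx)·∇g(Wz)) · (x·z)`. -/
theorem entk_eq_ptk_mul_inner
    (k d : ℕ) (g : EuclideanSpace ℝ (Fin k) → ℝ) (hg : Differentiable ℝ g)
    (W : Matrix (Fin k) (Fin d) ℝ) :
    ∀ x z : EuclideanSpace ℝ (Fin d),
      ((matGrad (fun M => g (WithLp.toLp 2 (M.mulVec x))) W)ᵀ * matGrad (fun M => g (WithLp.toLp 2 (M.mulVec z))) W).trace =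
        ((egrad g (WithLp.toLp 2 (W.mulVec x))) ⬝ᵥ (egrad g (WithLp.toLp 2 (W.mulVec z)))) * (x ⬝ᵥ z) := by
  intro x z
  rw [matGrad_comp_toLp_mulVec (hg _), matGrad_comp_toLp_mulVec (hg _),
    trace_transpose_vecMulVec_mul_vecMulVec]
end

section
/- Let Kn ∈ ℝ^{n×n} be a symmetric positive semidefinite matrix, let D ∈ ℝ^{n×n} be diagonal, and let X ∈ ℝ^{n×d}. Then trace((Xᵀ D Kn D X)(Xᵀ D Kn² D X)) ≥ 0. Equivalently, for symmetric positive semidefinite matrices A, C ∈ ℝ^{n×n}, trace(C A C A²) ≥ 0. -/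
/-!
Every positive semidefinite `C` factors as `Tᴴ * T`, and cycling the trace turns
`trace (C * A * C * A²)` into `trace ((T * A * Tᴴ) * ((T * A) * (T * A)ᴴ))`, a trace of a
product of two positive semidefinite matrices, which is nonnegative. The neural feature matrix
and the AGOP are `Bᴴ * Kn * B` and `Bᴴ * Kn² * B` with `B = D * X`, and cycling once more
reduces their trace covariance to the case `A = Kn`, `C = B * Bᴴ`.
-/

open Matrix
open scoped MatrixOrder ComplexOrder

namespace Matrix

variable {m n 𝕜 : Type*} [Fintype m] [Fintype n] [RCLike 𝕜]

theorem PosSemidef.trace_mul_nonneg {A B : Matrix n n 𝕜} (hA : A.PosSemidef)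
    (hB : B.PosSemidef) : 0 ≤ (A * B).trace := by
  classical
  obtain ⟨R, rfl⟩ := CStarAlgebra.nonneg_iff_eq_star_mul_self.mp hB.nonneg
  rw [star_eq_conjTranspose, ← Matrix.mul_assoc, trace_mul_comm]
  simpa only [Matrix.mul_assoc] using (hA.mul_mul_conjTranspose_same R).trace_nonneg

theorem PosSemidef.trace_mul_mul_mul_mul_self_nonneg {A C : Matrix n n 𝕜}
    (hA : A.PosSemidef) (hC : C.PosSemidef) : 0 ≤ (C * A * C * (A * A)).trace := by
  classical
  obtain ⟨T, rfl⟩ := CStarAlgebra.nonneg_iff_eq_star_mul_self.mp hC.nonneg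
  rw [star_eq_conjTranspose]
  have hTAT : (T * A * Tᴴ).PosSemidef := hA.mul_mul_conjTranspose_same T
  have hTA : (T * A * (T * A)ᴴ).PosSemidef := posSemidef_self_mul_conjTranspose _
  have hcycle : (Tᴴ * T * A * (Tᴴ * T) * (A * A)).trace
      = (T * A * Tᴴ * (T * A * (T * A)ᴴ)).trace := by
    rw [conjTranspose_mul, hA.isHermitian.eq]
    simp only [Matrix.mul_assoc]
    rw [trace_mul_comm Tᴴ]
    simp only [Matrix.mul_assoc]
  exact hcycle ▸ hTAT.trace_mul_nonneg hTA

theorem PosSemidef.trace_conjTranspose_mul_mul_mul_sq_nonneg {K : Matrix n n 𝕜}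
    (hK : K.PosSemidef) (B : Matrix n m 𝕜) :
    0 ≤ ((Bᴴ * K * B) * (Bᴴ * (K * K) * B)).trace := by
  have hcycle : ((Bᴴ * K * B) * (Bᴴ * (K * K) * B)).trace
      = (B * Bᴴ * K * (B * Bᴴ) * (K * K)).trace := by
    simp only [Matrix.mul_assoc]
    rw [trace_mul_comm B]
    simp only [Matrix.mul_assoc]
  exact hcycle ▸ hK.trace_mul_mul_mul_mul_self_nonneg (posSemidef_self_mul_conjTranspose B)

end Matrix

/-- For a symmetric positive semidefinite PTK matrix `Kn`, a diagonal
matrix `D` and data `X`, `trace((XᵀDKnDX)(XᵀDKn²DX)) ≥ 0`; equivalently, for symmetric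
positive semidefinite `A, C`, `trace(C A C A²) ≥ 0`. -/
theorem nonneg_trace_covariance_of_centered_nfm_agop
    (n d : ℕ) (Kn : Matrix (Fin n) (Fin n) ℝ) (hKn : Kn.PosSemidef)
    (D : Matrix (Fin n) (Fin n) ℝ) (hD : D.IsDiag)
    (X : Matrix (Fin n) (Fin d) ℝ) :
    0 ≤ ((Xᵀ * D * Kn * D * X) * (Xᵀ * D * (Kn * Kn) * D * X)).trace ∧
    ∀ (A C : Matrix (Fin n) (Fin n) ℝ), A.PosSemidef → C.PosSemidef →
      0 ≤ (C * A * C * (A * A)).trace := by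
  have hXD : Xᵀ * D = (D * X)ᴴ := by
    rw [conjTranspose_eq_transpose_of_trivial, transpose_mul, hD.isSymm.eq]
  refine ⟨?_, fun A C hA hC => hA.trace_mul_mul_mul_mul_self_nonneg hC⟩
  rw [hXD]
  simpa only [Matrix.mul_assoc] using hKn.trace_conjTranspose_mul_mul_mul_sq_nonneg (D * X)
end

section
/- Let k, d, n ≥ 1. Let a ∈ ℝ^k have i.i.d. standard Gaussian entries and let W ∈ ℝ^{k×d} have i.i.d. Gaussian entries with mean 0 and variance 1/k, with a and W independent. Let X ∈ ℝ^{n×d} be a fixed data matrix, let y ∈ ℝ^n be a fixed label vector, Y := diag(y), and define Kn := X Wᵀ diag(a)² W Xᵀ. Then E[Xᵀ Y Kn Y X] = (Xᵀ Y X)². -/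
open Matrix MeasureTheory ProbabilityTheory

/-- The joint law of `(a, W)`: `a ∈ ℝ^k` has i.i.d. standard Gaussian entries, `W ∈ ℝ^{k×d}`
has i.i.d. centered Gaussian entries of variance `v`, and `a` and `W` are independent
(the product Gaussian measure on all the entries). -/
noncomputable def gaussPairMeasure (k d : ℕ) (v : NNReal) :
    Measure ((Fin k → ℝ) × (Fin k → Fin d → ℝ)) :=
  (Measure.pi fun _ : Fin k => gaussianReal 0 1).prod
    (Measure.pi fun _ : Fin k => Measure.pi fun _ : Fin d => gaussianReal 0 v)

/-- Entrywise expectation of a random matrix. -/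
noncomputable def matExp {Ω m n : Type*} [MeasurableSpace Ω]
    (μ : Measure Ω) (M : Ω → Matrix m n ℝ) : Matrix m n ℝ :=
  Matrix.of fun i j => ∫ ω, M ω i j ∂μ

/-!
Write `B = XᵀYX`. The random matrix is `B (Wᵀ diag(a)² W) B`, so by linearity of expectation it
suffices that `E[Wᵀ diag(a)² W] = I`. Its `(s, t)` entry is `∑ᵢ E[aᵢ²] E[Wᵢₛ Wᵢₜ]`, by independence
of `a` and `W`; the entries of `W` are independent and centered, so `E[Wᵢₛ Wᵢₜ] = δₛₜ / k`, and the
`k` summands add up to `δₛₜ`.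
-/

namespace ProbabilityTheory

lemma integral_sq_gaussianReal_zero (v : NNReal) : ∫ x, x ^ 2 ∂gaussianReal 0 v = v := by
  have h := variance_of_integral_eq_zero aemeasurable_id
    (integral_id_gaussianReal (μ := 0) (v := v))
  rw [variance_id_gaussianReal] at h
  exact h.symm

section Pi

variable {ι : Type*} [Fintype ι] {ν : Measure ℝ} [IsProbabilityMeasure ν]

lemma integral_eval_mul_eval_pi [DecidableEq ι] (s t : ι) :
    ∫ x, x s * x t ∂Measure.pi (fun _ : ι => ν) =
      if s = t then ∫ x, x ^ 2 ∂ν else (∫ x, x ∂ν) ^ 2 := by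
  split_ifs with hst
  · subst hst
    simp_rw [← sq]
    exact integral_comp_eval (μ := fun _ : ι => ν) (f := fun x : ℝ => x ^ 2) (by fun_prop)
  · have hindep := (iIndepFun_pi (μ := fun _ : ι => ν) (X := fun _ x => x)
      fun _ => aemeasurable_id).indepFun hst
    rw [hindep.integral_fun_mul_eq_mul_integral (measurable_pi_apply s).aestronglyMeasurable
      (measurable_pi_apply t).aestronglyMeasurable, integral_eval, integral_eval, sq]

lemma integrable_eval_mul_eval_pi (hν : MemLp id 2 ν) (s t : ι) :
    Integrable (fun x => x s * x t) (Measure.pi fun _ : ι => ν) :=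
  (hν.comp_measurePreserving (measurePreserving_eval _ s)).integrable_mul
    (hν.comp_measurePreserving (measurePreserving_eval _ t))

end Pi

lemma integral_eval_mul_eval_pi_gaussianReal {ι : Type*} [Fintype ι] [DecidableEq ι]
    (v : NNReal) (s t : ι) :
    ∫ x, x s * x t ∂Measure.pi (fun _ : ι => gaussianReal 0 v) =
      if s = t then (v : ℝ) else 0 := by
  simp [integral_eval_mul_eval_pi, integral_sq_gaussianReal_zero, integral_id_gaussianReal]

end ProbabilityTheory

lemma Matrix.transpose_mul_diagonal_mul_apply {m n R : Type*} [Fintype m] [DecidableEq m]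
    [CommSemiring R] (W : Matrix m n R) (c : m → R) (s t : n) :
    (Wᵀ * diagonal c * W) s t = ∑ i, c i * (W i s * W i t) := by
  rw [mul_apply]
  simp only [mul_diagonal, transpose_apply]
  exact Finset.sum_congr rfl fun i _ => by ring

lemma matExp_mul_mul {Ω l m n p : Type*} [MeasurableSpace Ω] [Fintype m] [Fintype n]
    {μ : Measure Ω} (A : Matrix l m ℝ) (M : Ω → Matrix m n ℝ) (C : Matrix n p ℝ)
    (hM : ∀ i j, Integrable (fun ω => M ω i j) μ) :
    matExp μ (fun ω => A * M ω * C) = A * matExp μ M * C := by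
  ext i j
  simp only [matExp, of_apply, mul_apply, Finset.sum_mul]
  rw [integral_finsetSum _ fun r _ => integrable_finsetSum _ fun q _ =>
    ((hM q r).const_mul _).mul_const _]
  refine Finset.sum_congr rfl fun r _ => ?_
  rw [integral_finsetSum _ fun q _ => ((hM q r).const_mul _).mul_const _]
  refine Finset.sum_congr rfl fun q _ => ?_
  rw [integral_mul_const, integral_const_mul]

section GaussPair

variable {k d : ℕ} (v : NNReal)

lemma integrable_sq_mul_gaussPairMeasure (i : Fin k) (s t : Fin d) :
    Integrable (fun ω : (Fin k → ℝ) × (Fin k → Fin d → ℝ) => ω.1 i ^ 2 * (ω.2 i s * ω.2 i t))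
      (gaussPairMeasure k d v) :=
  (integrable_comp_eval (μ := fun _ : Fin k => gaussianReal 0 1) (f := fun x => x ^ 2)
      (memLp_id_gaussianReal 2).integrable_sq).mul_prod
    (integrable_comp_eval (μ := fun _ : Fin k => Measure.pi fun _ => gaussianReal 0 v)
      (f := fun r : Fin d → ℝ => r s * r t)
      (integrable_eval_mul_eval_pi (memLp_id_gaussianReal 2) s t))

lemma integral_sq_mul_gaussPairMeasure (i : Fin k) (s t : Fin d) :
    ∫ ω, ω.1 i ^ 2 * (ω.2 i s * ω.2 i t) ∂gaussPairMeasure k d v =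
      if s = t then (v : ℝ) else 0 := by
  rw [gaussPairMeasure, integral_prod_mul (fun a : Fin k → ℝ => a i ^ 2)
      (fun W : Fin k → Fin d → ℝ => W i s * W i t),
    integral_comp_eval (μ := fun _ => gaussianReal 0 1) (f := fun x => x ^ 2) (by fun_prop),
    integral_sq_gaussianReal_zero,
    integral_comp_eval (μ := fun _ : Fin k => Measure.pi fun _ => gaussianReal 0 v)
      (f := fun r : Fin d → ℝ => r s * r t) (by fun_prop),
    integral_eval_mul_eval_pi_gaussianReal]
  simp

lemma integrable_transpose_mul_diagonal_mul_apply_gaussPairMeasure (s t : Fin d) :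
    Integrable (fun ω : (Fin k → ℝ) × (Fin k → Fin d → ℝ) =>
      ((of ω.2)ᵀ * diagonal (fun i => ω.1 i ^ 2) * of ω.2) s t) (gaussPairMeasure k d v) := by
  simpa only [transpose_mul_diagonal_mul_apply, of_apply] using
    integrable_finsetSum _ fun i _ => integrable_sq_mul_gaussPairMeasure v i s t

lemma matExp_transpose_mul_diagonal_mul_gaussPairMeasure :
    matExp (gaussPairMeasure k d v)
        (fun ω => (of ω.2)ᵀ * diagonal (fun i => ω.1 i ^ 2) * of ω.2) =
      ((k : ℝ) * v) • (1 : Matrix (Fin d) (Fin d) ℝ) := by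
  ext s t
  simp only [matExp, of_apply, transpose_mul_diagonal_mul_apply]
  rw [integral_finsetSum _ fun i _ => integrable_sq_mul_gaussPairMeasure v i s t]
  simp [integral_sq_mul_gaussPairMeasure, one_apply]

end GaussPair

theorem expectation_centered_nfm_quadratic_general
    (k d n : ℕ) (hk : 1 ≤ k)
    (X : Matrix (Fin n) (Fin d) ℝ) (y : Fin n → ℝ) :
    matExp (gaussPairMeasure k d ((k : NNReal))⁻¹)
        (fun ω =>
          Xᵀ * Matrix.diagonal y *
            (X * ((Matrix.of ω.2)ᵀ * Matrix.diagonal (fun i => ω.1 i ^ 2) * Matrix.of ω.2) * Xᵀ) *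
            Matrix.diagonal y * X) =
      (Xᵀ * Matrix.diagonal y * X) ^ 2 := by
  set B := Xᵀ * diagonal y * X
  have hB : ∀ M : Matrix (Fin d) (Fin d) ℝ,
      Xᵀ * diagonal y * (X * M * Xᵀ) * diagonal y * X = B * M * B :=
    fun M => by simp only [B, Matrix.mul_assoc]
  have hk0 : (k : ℝ) ≠ 0 := by positivity
  simp_rw [hB]
  rw [matExp_mul_mul _ _ _ (integrable_transpose_mul_diagonal_mul_apply_gaussPairMeasure _),
    matExp_transpose_mul_diagonal_mul_gaussPairMeasure]
  simp [hk0, sq]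

/-- expected centered NFM of Proposition (Expected NFM and AGOP).
For the one-hidden-layer quadratic network at initialization with `a` i.i.d. standard
Gaussian, `W` i.i.d. `N(0, 1/k)`, independent, data `X`, labels `y`, `Y := diag(y)` and
`Kn := X Wᵀ diag(a)² W Xᵀ`, one has `E[Xᵀ Y Kn Y X] = (Xᵀ Y X)²`. -/
theorem expectation_centered_nfm_quadratic
    (k d n : ℕ) (hk : 1 ≤ k) (hd : 1 ≤ d) (hn : 1 ≤ n)
    (X : Matrix (Fin n) (Fin d) ℝ) (y : Fin n → ℝ) :
    matExp (gaussPairMeasure k d ((k : NNReal))⁻¹)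
        (fun ω =>
          Xᵀ * Matrix.diagonal y *
            (X * ((Matrix.of ω.2)ᵀ * Matrix.diagonal (fun i => ω.1 i ^ 2) * Matrix.of ω.2) * Xᵀ) *
            Matrix.diagonal y * X) =
      (Xᵀ * Matrix.diagonal y * X) ^ 2 :=
  expectation_centered_nfm_quadratic_general k d n hk X y
end
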